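/- arXiv:2303.11933 — 2 statements merged into one kernel-verified Lean document; each statement's English description precedes it below -/
import Mathlib

section
/- With A_k as in the recursion A_{k+2} = max(1,k)(k+1)(1 − 4ν²/(k+1)²) A_k, A₀ = 2tan(πν)/π, A₁ = −2ν, and with λ = sin(πν)/π, the quantity K^∞_{ν,k} := (−1)^k (max(1,k−1))! · 2λ / A_k equals Γ((k+1)/2)² / (Γ((k+1)/2+ν)Γ((k+1)/2−ν)) for all integers k ≥ 0 and all ν with |ν| < 1/2, ν ≠ 0. -/
private lemma max_fact (n : ℕ) : (max 1 n).factorial = n.factorial := by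
  cases n with
  | zero => rfl
  | succ m => rw [Nat.max_eq_right (Nat.succ_le_succ (Nat.zero_le m))]

private lemma fact_split (k : ℕ) :
    k.factorial = (max 1 k) * (max 1 (k-1)).factorial := by
  cases k with
  | zero => rfl
  | succ m =>
    rw [Nat.factorial_succ, max_fact, Nat.max_eq_right (Nat.succ_le_succ (Nat.zero_le m))]
    rfl

set_option maxHeartbeats 1000000 in
/-- The connection coefficient `K^∞_{ν,k} = (−1)^k (max(1,k−1))! · 2λ / A_k`
obtained from the recursion coefficients `A_k` agrees with the closed
Gamma-function formula (combining eqs. (3.51), (3.52) and (2.42)). -/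
theorem Kinf_from_recursion (ν : ℝ) (hν : |ν| < 1/2) (hν0 : ν ≠ 0) (A : ℕ → ℝ)
    (hA0 : A 0 = 2 * Real.tan (Real.pi * ν) / Real.pi)
    (hA1 : A 1 = -2 * ν)
    (hrec : ∀ k : ℕ,
      A (k+2) = ((max 1 k : ℕ) : ℝ) * ((k:ℝ)+1) * (1 - 4*ν^2 / ((k:ℝ)+1)^2) * A k) :
    ∀ k : ℕ,
      (-1:ℝ)^k * ((max 1 (k-1) : ℕ).factorial : ℝ) * (2 * (Real.sin (Real.pi*ν) / Real.pi)) / A k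
        = Real.Gamma (((k:ℝ)+1)/2)^2
            / (Real.Gamma (((k:ℝ)+1)/2 + ν) * Real.Gamma (((k:ℝ)+1)/2 - ν)) := by
  have hπ := Real.pi_pos
  obtain ⟨hνl, hνr⟩ := abs_lt.mp hν
  have hπν1 : -(Real.pi/2) < Real.pi * ν := by nlinarith
  have hπν2 : Real.pi * ν < Real.pi/2 := by nlinarith
  have hcos : 0 < Real.cos (Real.pi * ν) :=
    Real.cos_pos_of_mem_Ioo ⟨hπν1, hπν2⟩
  have hsin : Real.sin (Real.pi * ν) ≠ 0 := by
    intro h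
    rw [Real.sin_eq_zero_iff_of_lt_of_lt (by linarith) (by linarith)] at h
    rcases mul_eq_zero.mp h with h' | h'
    · exact hπ.ne' h'
    · exact hν0 h'
  -- positivity of the recursion factor
  have hd : ∀ k : ℕ, (0:ℝ) < 1 - 4*ν^2 / ((k:ℝ)+1)^2 := by
    intro k
    have hk : (0:ℝ) ≤ (k:ℝ) := Nat.cast_nonneg k
    have hp : (0:ℝ) < ((k:ℝ)+1)^2 := by positivity
    rw [sub_pos, div_lt_one hp]
    nlinarith
  have hm : ∀ k : ℕ, (0:ℝ) < ((max 1 k : ℕ) : ℝ) := by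
    intro k
    exact_mod_cast Nat.lt_of_lt_of_le Nat.zero_lt_one (le_max_left 1 k)
  -- nonvanishing of A
  have hAne : ∀ k, A k ≠ 0 := by
    have key : ∀ k, A k ≠ 0 ∧ A (k+1) ≠ 0 := by
      intro k
      induction k with
      | zero =>
        constructor
        · rw [hA0]
          have ht : Real.tan (Real.pi * ν) ≠ 0 := by
            rw [Real.tan_eq_sin_div_cos]
            exact div_ne_zero hsin hcos.ne'
          exact div_ne_zero (mul_ne_zero two_ne_zero ht) hπ.ne'
        · rw [hA1]
          exact mul_ne_zero (by norm_num) hν0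
      | succ n ih =>
        refine ⟨ih.2, ?_⟩
        rw [hrec n]
        exact mul_ne_zero (mul_ne_zero (mul_ne_zero (hm n).ne'
          (by positivity)) (hd n).ne') ih.1
    exact fun k => (key k).1
  -- the statement
  set P : ℕ → Prop := fun k =>
      (-1:ℝ)^k * ((max 1 (k-1) : ℕ).factorial : ℝ) * (2 * (Real.sin (Real.pi*ν) / Real.pi)) / A k
        = Real.Gamma (((k:ℝ)+1)/2)^2
            / (Real.Gamma (((k:ℝ)+1)/2 + ν) * Real.Gamma (((k:ℝ)+1)/2 - ν)) with hP
  have base0 : P 0 := by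
    simp only [hP]
    simp only [Nat.zero_sub, Nat.max_self, pow_zero, Nat.cast_zero]
    norm_num
    rw [hA0, Real.tan_eq_sin_div_cos]
    have h12 : ((1:ℝ))/2 - ν = 1 - (1/2 + ν) := by ring
    rw [h12, Real.Gamma_mul_Gamma_one_sub, Real.Gamma_one_half_eq,
      show Real.pi * ((1:ℝ)/2 + ν) = Real.pi/2 + Real.pi * ν by ring,
      Real.sin_add]
    simp only [Real.sin_pi_div_two, Real.cos_pi_div_two]
    rw [Real.sq_sqrt hπ.le]
    field_simp
    ring
  have base1 : P 1 := by
    simp only [hP]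
    rw [hA1]
    norm_num
    have hGν := Real.Gamma_mul_Gamma_one_sub ν
    rw [show (1:ℝ) + ν = ν + 1 by ring, Real.Gamma_add_one hν0, ← mul_inv,
      show Real.Gamma (1-ν) * (ν * Real.Gamma ν)
          = ν * (Real.Gamma ν * Real.Gamma (1-ν)) by ring, hGν]
    field_simp
  have step : ∀ n : ℕ, P n → P (n+2) := by
    intro n ihn
    simp only [hP] at ihn ⊢
    have hkn : (0:ℝ) ≤ (n:ℝ) := Nat.cast_nonneg n
    have hspν : (0:ℝ) < ((n:ℝ)+1)/2 + ν := by linarith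
    have hsmν : (0:ℝ) < ((n:ℝ)+1)/2 - ν := by linarith
    have hs : (0:ℝ) < ((n:ℝ)+1)/2 := by linarith
    have hGp := Real.Gamma_pos_of_pos hspν
    have hGm := Real.Gamma_pos_of_pos hsmν
    have hGs := Real.Gamma_pos_of_pos hs
    have e2 : (((n+2:ℕ):ℝ)+1)/2 + ν = (((n:ℝ)+1)/2 + ν) + 1 := by push_cast; ring
    have e3 : (((n+2:ℕ):ℝ)+1)/2 - ν = (((n:ℝ)+1)/2 - ν) + 1 := by push_cast; ring
    have e1 : (((n+2:ℕ):ℝ)+1)/2 = ((n:ℝ)+1)/2 + 1 := by push_cast; ring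
    rw [e2, e3, e1, Real.Gamma_add_one hspν.ne', Real.Gamma_add_one hsmν.ne',
      Real.Gamma_add_one hs.ne']
    have hfac : ((max 1 (n + 2 - 1) : ℕ).factorial : ℝ)
        = ((n:ℝ)+1) * ((max 1 n : ℕ) : ℝ) * ((max 1 (n-1) : ℕ).factorial : ℝ) := by
      have h1 : max 1 (n + 2 - 1) = n + 1 := by omega
      rw [h1, Nat.factorial_succ, fact_split n]
      push_cast
      ring
    have hpow : (-1:ℝ)^(n+2) = (-1:ℝ)^n := by
      rw [pow_succ, pow_succ]; ring
    rw [hrec n, hfac, hpow]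
    have hne : ((n:ℝ)+1)^2 - 4*ν^2 ≠ 0 := by nlinarith
    have hn1 : ((n:ℝ)+1) ≠ 0 := by positivity
    calc (-1:ℝ)^n * (((n:ℝ)+1) * ((max 1 n : ℕ) : ℝ) * ((max 1 (n-1) : ℕ).factorial : ℝ))
          * (2 * (Real.sin (Real.pi*ν) / Real.pi))
          / (((max 1 n : ℕ) : ℝ) * ((n:ℝ)+1) * (1 - 4*ν^2 / ((n:ℝ)+1)^2) * A n)
        = ((-1:ℝ)^n * ((max 1 (n-1) : ℕ).factorial : ℝ)
            * (2 * (Real.sin (Real.pi*ν) / Real.pi)) / A n)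
          * (((n:ℝ)+1)^2 / (((n:ℝ)+1)^2 - 4*ν^2)) := by
          field_simp [(hm n).ne', hAne n]
      _ = (Real.Gamma (((n:ℝ)+1)/2)^2
            / (Real.Gamma (((n:ℝ)+1)/2 + ν) * Real.Gamma (((n:ℝ)+1)/2 - ν)))
          * (((n:ℝ)+1)^2 / (((n:ℝ)+1)^2 - 4*ν^2)) := by rw [ihn]
      _ = (((n:ℝ)+1)/2 * Real.Gamma (((n:ℝ)+1)/2))^2
          / ((((n:ℝ)+1)/2 + ν) * Real.Gamma (((n:ℝ)+1)/2 + ν)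
            * ((((n:ℝ)+1)/2 - ν) * Real.Gamma (((n:ℝ)+1)/2 - ν))) := by
          have hpos : (0:ℝ) < ((n:ℝ)+1)^2 - 4*ν^2 := by nlinarith
          rw [div_mul_div_comm, div_eq_div_iff
            (mul_ne_zero (mul_ne_zero hGp.ne' hGm.ne') hpos.ne')
            (mul_ne_zero (mul_ne_zero hspν.ne' hGp.ne') (mul_ne_zero hsmν.ne' hGm.ne'))]
          ring
  -- two-step induction
  have main : ∀ k, P k ∧ P (k+1) := by
    intro k
    induction k with
    | zero => exact ⟨base0, base1⟩
    | succ n ih => exact ⟨ih.2, step n ih.1⟩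
  exact fun k => (main k).1
end

section
/- Under the hypotheses of the previous setup (K̂ trace class with ‖K̂‖ < 1, Û = (1−K̂²)⁻¹, V̂ = K̂Û), the trace identity Φ_k := 4 tr(M̂^k V̂) = 2⟨E₀| Û M̂^{k−1} Û |E₀⟩ − 2⟨E₀| V̂ M̂^{k−1} V̂ |E₀⟩ holds for every integer k ≥ 1. -/
/-- Trace identity (3.28) in the Tracy–Widom framework: with a cyclic trace,
`Û = (1−K̂²)⁻¹`, `V̂ = K̂Û` and `M̂K̂ + K̂M̂ = P = |E₀⟩⟨E₀|`, one has
`Φ_k = 4 tr(M̂^k V̂) = 2⟨E₀|ÛM̂^{k−1}Û|E₀⟩ − 2⟨E₀|V̂M̂^{k−1}V̂|E₀⟩`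
(where `⟨E₀|A|E₀⟩ = tr(A P)`), for every `k ≥ 1`. -/
theorem tracy_widom_trace_identity {A : Type*} [Ring A] [Algebra ℝ A]
    (tr : A →ₗ[ℝ] ℝ) (hcyc : ∀ a b : A, tr (a * b) = tr (b * a))
    (M K U V P : A)
    (hU1 : (1 - K^2) * U = 1) (hU2 : U * (1 - K^2) = 1)
    (hUK : K * U = U * K) (hV : V = K * U)
    (hMK : M * K + K * M = P) :
    ∀ k : ℕ, 1 ≤ k →
      4 * tr (M^k * V)
        = 2 * tr (U * M^(k-1) * U * P) - 2 * tr (V * M^(k-1) * V * P) := by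
  intro k hk
  obtain ⟨n, rfl⟩ : ∃ n, k = n + 1 := ⟨k - 1, (Nat.succ_pred_eq_of_pos hk).symm⟩
  simp only [Nat.add_sub_cancel]
  -- Key anticommutation identity: M V + V M = U P U − V P V
  have key : M*V + V*M = U*P*U - V*P*V := by
    subst hV
    have h1 : K*U*P*(K*U) = U*(K*P*K)*U := by
      nth_rewrite 1 [hUK]; noncomm_ring
    calc M*(K*U) + (K*U)*M
        = M*(K*U) + (U*K)*M := by rw [hUK]
      _ = (U*(1-K^2))*(M*(K*U)) + ((U*K)*M)*((1-K^2)*U) := by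
          rw [hU2, hU1]; noncomm_ring
      _ = U*((M*K+K*M) - K*(M*K+K*M)*K)*U := by noncomm_ring
      _ = U*P*U - U*(K*P*K)*U := by rw [hMK]; noncomm_ring
      _ = U*P*U - K*U*P*(K*U) := by rw [h1]
  have t1 : tr (M^(n+1) * V) = tr (M^n * (M*V)) := by
    rw [pow_succ, mul_assoc]
  have t2 : tr (M^(n+1) * V) = tr (M^n * (V*M)) := by
    rw [hcyc, pow_succ', ← mul_assoc, hcyc]
  have hsum : 2 * tr (M^(n+1)*V)
      = tr (M^n*(U*P*U)) - tr (M^n*(V*P*V)) := by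
    have : tr (M^(n+1)*V) + tr (M^(n+1)*V)
        = tr (M^n*(U*P*U)) - tr (M^n*(V*P*V)) := by
      nth_rewrite 1 [t1]
      rw [t2, ← map_add, ← mul_add, key, mul_sub, map_sub]
    linarith
  have c1 : tr (M^n*(U*P*U)) = tr (U * M^n * U * P) := by
    have h := hcyc (M^n*U*P) U
    have e1 : M^n*(U*P*U) = M^n*U*P*U := by simp [mul_assoc]
    have e2 : U*(M^n*U*P) = U*M^n*U*P := by simp [mul_assoc]
    rw [e1, h, e2]
  have c2 : tr (M^n*(V*P*V)) = tr (V * M^n * V * P) := by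
    have h := hcyc (M^n*V*P) V
    have e1 : M^n*(V*P*V) = M^n*V*P*V := by simp [mul_assoc]
    have e2 : V*(M^n*V*P) = V*M^n*V*P := by simp [mul_assoc]
    rw [e1, h, e2]
  rw [← c1, ← c2]
  linarith [hsum]
end
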